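/- Let ω be a doubling measure on ℝⁿ and κ ∈ ℕ. For every cube I and locally f ∈ L²_loc(ω), the projection 𝔼^ω_{I;κ} f of f onto the space of polynomials of degree less than κ restricted to I (orthogonal projection in L²(ω)) satisfies ‖𝔼^ω_{I;κ} f‖_{L^∞(I,ω)} ≤ C (1/|I|_ω ∫_I |f|² dω)^{1/2}, with C depending only on n, κ and the doubling constant of ω. -/

import Mathlib

open MeasureTheory ENNReal

noncomputable section

/-- The axis-parallel cube in `ℝⁿ` with center `c` and side length `l`. -/
def Cube (n : ℕ) (c : Fin n → ℝ) (l : ℝ) : Set (Fin n → ℝ) :=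
  {x | ∀ i, |x i - c i| ≤ l / 2}

/-- A measure is doubling with constant `C` if `μ(2Q) ≤ C μ(Q)` for all cubes `Q`. -/
def IsDoubling {n : ℕ} (μ : Measure (Fin n → ℝ)) (C : ℝ) : Prop :=
  ∀ (c : Fin n → ℝ) (l : ℝ), 0 < l →
    μ (Cube n c (2 * l)) ≤ ENNReal.ofReal C * μ (Cube n c l)

/-!
Polynomials of degree `≤ d` restricted to a compact set form a finite-dimensional space of
continuous functions, so they are uniformly equicontinuous relative to their sup norm. After
rescaling, this says: if `|p|` attains its maximum on a cube `I` at `x₀`, then `|p| ≥ |p x₀| / 2`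
on a subcube `J ⊆ I` whose side is a fixed fraction `2⁻ᵏ` of that of `I`. Hence
`|p x₀|² ω(J) ≲ ∫_I p² dω`, Bessel's inequality bounds this by `∫_I f² dω`, and `k + 1`
doublings give `ω(I) ≤ C_d^{k+1} ω(J)`.
-/

open Metric MvPolynomial

theorem exists_dist_apply_le_mul_norm {X E : Type*} [MetricSpace X] [CompactSpace X]
    [NormedAddCommGroup E] [NormedSpace ℝ E]
    (V : Submodule ℝ C(X, E)) [FiniteDimensional ℝ V] {η : ℝ} (hη : 0 < η) :
    ∃ δ > 0, ∀ g ∈ V, ∀ x y : X, dist x y ≤ δ → dist (g x) (g y) ≤ η * ‖g‖ := by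
  have hB : IsCompact ((↑) '' closedBall (0 : V) 1 : Set C(X, E)) :=
    (isCompact_closedBall _ _).image continuous_subtype_val
  obtain ⟨δ, hδ, hunif⟩ := Metric.uniformContinuousOn_iff_le.mp
    ((hB.prod isCompact_univ).uniformContinuousOn_of_continuous
      (continuous_eval (F := C(X, E))).continuousOn) η hη
  refine ⟨δ, hδ, fun g hg x y hxy => ?_⟩
  rcases eq_or_ne g 0 with rfl | hg0
  · simp
  have hg' : ‖g‖⁻¹ • g ∈ (↑) '' closedBall (0 : V) 1 :=
    ⟨⟨_, V.smul_mem _ hg⟩, by simp [norm_smul, hg0], rfl⟩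
  have := hunif (_, x) ⟨hg', trivial⟩ (_, y) ⟨hg', trivial⟩ (by simpa [Prod.dist_eq] using hxy)
  simp only [ContinuousMap.smul_apply, dist_smul₀, norm_inv, norm_norm] at this
  rwa [inv_mul_le_iff₀ (norm_pos_iff.mpr hg0), mul_comm] at this

theorem MvPolynomial.totalDegree_bind₁_le {σ τ R : Type*} [CommSemiring R]
    {f : σ → MvPolynomial τ R} {k : ℕ} (hf : ∀ i, (f i).totalDegree ≤ k)
    (p : MvPolynomial σ R) : (bind₁ f p).totalDegree ≤ k * p.totalDegree := by
  classical
  conv_lhs => rw [p.as_sum, map_sum]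
  refine totalDegree_finsetSum_le fun v hv => ?_
  rw [bind₁_monomial]
  calc (C (coeff v p) * ∏ i ∈ v.support, f i ^ v i).totalDegree
      ≤ ∑ i ∈ v.support, v i * k := by
        refine (totalDegree_mul _ _).trans ?_
        rw [totalDegree_C, zero_add]
        refine (totalDegree_finsetProd _ _).trans (Finset.sum_le_sum fun i _ => ?_)
        exact (totalDegree_pow _ _).trans (Nat.mul_le_mul_left _ (hf i))
    _ = k * v.degree := by rw [Finsupp.degree_apply, Finset.mul_sum]; simp only [mul_comm]
    _ ≤ k * p.totalDegree := Nat.mul_le_mul_left _ (le_totalDegree hv)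

theorem exists_closedBall_subset_closedBall_dist_le {E : Type*} [NormedAddCommGroup E]
    [NormedSpace ℝ E] {c x₀ : E} {r ρ : ℝ} (hx₀ : x₀ ∈ closedBall c r) (hr : 0 < r)
    (hρ : 0 ≤ ρ) (hρr : ρ ≤ r) :
    ∃ c', closedBall c' ρ ⊆ closedBall c r ∧ dist c' x₀ ≤ ρ ∧ dist c' c ≤ r := by
  have hx₀c : dist c x₀ ≤ r := by rw [dist_comm]; exact hx₀
  have ht : 0 ≤ 1 - ρ / r := by rw [sub_nonneg, div_le_one hr]; exact hρr
  -- pull the center from `x₀` towards `c` just enough to fit inside `closedBall c r`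
  set c' := AffineMap.lineMap c x₀ (1 - ρ / r)
  have hc'c : dist c' c ≤ r - ρ := by
    rw [dist_lineMap_left, Real.norm_of_nonneg ht]
    calc (1 - ρ / r) * dist c x₀ ≤ (1 - ρ / r) * r := by gcongr
      _ = r - ρ := by field_simp
  have hc'x₀ : dist c' x₀ ≤ ρ := by
    rw [dist_lineMap_right, _root_.sub_sub_cancel, Real.norm_of_nonneg (by positivity)]
    calc ρ / r * dist c x₀ ≤ ρ / r * r := by gcongr
      _ = ρ := by field_simp
  exact ⟨c', closedBall_subset_closedBall' (by linarith), hc'x₀, by linarith⟩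

section PolynomialOscillation

variable {σ : Type*} [Fintype σ]

def MvPolynomial.evalOn (K : Set (σ → ℝ)) : MvPolynomial σ ℝ →ₗ[ℝ] C(K, ℝ) where
  toFun p := ⟨fun x => eval (x : σ → ℝ) p, (continuous_eval p).comp continuous_subtype_val⟩
  map_add' _ _ := by ext; simp
  map_smul' _ _ := by ext; simp

theorem MvPolynomial.exists_abs_eval_sub_le_of_isCompact {K : Set (σ → ℝ)} (hK : IsCompact K)
    (d : ℕ) {η : ℝ} (hη : 0 < η) :
    ∃ δ > 0, ∀ p : MvPolynomial σ ℝ, p.totalDegree ≤ d → ∀ M : ℝ, (∀ z ∈ K, |eval z p| ≤ M) →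
      ∀ x ∈ K, ∀ y ∈ K, dist x y ≤ δ → |eval x p - eval y p| ≤ η * M := by
  have : CompactSpace K := isCompact_iff_compactSpace.mp hK
  obtain ⟨δ, hδ, h⟩ :=
    exists_dist_apply_le_mul_norm ((restrictTotalDegree σ ℝ d).map (evalOn K)) hη
  refine ⟨δ, hδ, fun p hp M hM x hx y hy hxy => ?_⟩
  have hnorm : ‖evalOn K p‖ ≤ M :=
    (ContinuousMap.norm_le _ ((abs_nonneg _).trans (hM x hx))).mpr fun z => hM z z.2
  calc |eval x p - eval y p|
      = dist (evalOn K p ⟨x, hx⟩) (evalOn K p ⟨y, hy⟩) := rfl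
    _ ≤ η * ‖evalOn K p‖ :=
        h _ (Submodule.mem_map_of_mem ((mem_restrictTotalDegree _ _ _).mpr hp)) _ _ hxy
    _ ≤ η * M := by gcongr

theorem MvPolynomial.exists_abs_eval_sub_le_of_closedBall (d : ℕ) {η : ℝ} (hη : 0 < η) :
    ∃ δ > 0, ∀ p : MvPolynomial σ ℝ, p.totalDegree ≤ d → ∀ (c : σ → ℝ) (r : ℝ), 0 < r →
      ∀ M : ℝ, (∀ z ∈ closedBall c r, |eval z p| ≤ M) →
      ∀ x ∈ closedBall c r, ∀ y ∈ closedBall c r, dist x y ≤ δ * r →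
        |eval x p - eval y p| ≤ η * M := by
  obtain ⟨δ, hδ, h⟩ :=
    exists_abs_eval_sub_le_of_isCompact (isCompact_closedBall (0 : σ → ℝ) 1) d hη
  refine ⟨δ, hδ, fun p hp c r hr M hM x hx y hy hxy => ?_⟩
  set q := bind₁ (fun i => C (c i) + C r * X i) p
  have hq : ∀ z, eval z q = eval (c + r • z) p := fun z => by
    rw [hom_bind₁, show (eval z).comp C = RingHom.id ℝ from RingHom.ext (eval_C (f := z))]
    show _ = eval₂Hom (RingHom.id ℝ) (c + r • z) p
    congr; funext i; simp
  have hq_deg : q.totalDegree ≤ d := by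
    refine (totalDegree_bind₁_le (k := 1) (fun i => ?_) p).trans (by omega)
    refine (totalDegree_add _ _).trans (max_le (by simp) ?_)
    exact (totalDegree_mul _ _).trans (by simp)
  have hmem : ∀ z, c + r • z ∈ closedBall c r ↔ z ∈ closedBall 0 1 := fun z => by
    simp [dist_eq_norm, norm_smul, abs_of_pos hr, hr]
  have hunscale : ∀ z, c + r • (r⁻¹ • (z - c)) = z := fun z => by
    rw [smul_inv_smul₀ hr.ne', add_sub_cancel]
  have := h q hq_deg M (fun z hz => hq z ▸ hM _ ((hmem z).mpr hz))
    (r⁻¹ • (x - c)) ((hmem _).mp ((hunscale x).symm ▸ hx))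
    (r⁻¹ • (y - c)) ((hmem _).mp ((hunscale y).symm ▸ hy)) ?_
  · rwa [hq, hq, hunscale, hunscale] at this
  · rw [dist_smul₀, dist_sub_right, norm_inv, Real.norm_of_nonneg hr.le, inv_mul_le_iff₀ hr,
      mul_comm]
    exact hxy

theorem MvPolynomial.exists_closedBall_abs_eval_ge (d : ℕ) :
    ∃ k : ℕ, ∀ p : MvPolynomial σ ℝ, p.totalDegree ≤ d → ∀ (c : σ → ℝ) (r : ℝ), 0 < r →
      ∀ x₀ ∈ closedBall c r, (∀ z ∈ closedBall c r, |eval z p| ≤ |eval x₀ p|) →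
      ∃ c', closedBall c' (r / 2 ^ k) ⊆ closedBall c r ∧
        closedBall c r ⊆ closedBall c' (2 ^ (k + 1) * (r / 2 ^ k)) ∧
        ∀ y ∈ closedBall c' (r / 2 ^ k), |eval x₀ p| ≤ 2 * |eval y p| := by
  obtain ⟨δ, hδ, hosc⟩ := exists_abs_eval_sub_le_of_closedBall (σ := σ) d one_half_pos
  obtain ⟨k, hk⟩ := pow_unbounded_of_one_lt (2 / δ) one_lt_two
  refine ⟨k, fun p hp c r hr x₀ hx₀ hmax => ?_⟩
  set ρ := r / 2 ^ k
  have hρδ : 2 * ρ ≤ δ * r := by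
    have : 2 / 2 ^ k < δ := by rw [div_lt_iff₀ hδ] at hk; rw [div_lt_iff₀ (by positivity)]; linarith
    calc 2 * ρ = 2 / 2 ^ k * r := by ring
      _ ≤ δ * r := by gcongr
  obtain ⟨c', hJI, hc'x₀, hc'c⟩ := exists_closedBall_subset_closedBall_dist_le hx₀ hr
    (by positivity) (div_le_self hr.le (one_le_pow₀ one_le_two))
  refine ⟨c', hJI, closedBall_subset_closedBall' ?_, fun y hy => ?_⟩
  · have : 2 ^ (k + 1) * ρ = 2 * r := by simp only [ρ, pow_succ]; field_simp
    rw [this, dist_comm]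
    linarith
  have hyx₀ : dist y x₀ ≤ δ * r :=
    (dist_triangle y c' x₀).trans (by linarith [mem_closedBall.mp hy])
  have := hosc p hp c r hr _ hmax x₀ hx₀ y (hJI hy) (by rw [dist_comm]; exact hyx₀)
  linarith [abs_sub_abs_le_abs_sub (eval x₀ p) (eval y p)]

end PolynomialOscillation

theorem cube_eq_closedBall {n : ℕ} (c : Fin n → ℝ) {l : ℝ} (hl : 0 ≤ l) :
    Cube n c l = closedBall c (l / 2) := by
  ext x
  simp [Cube, dist_pi_le_iff (by positivity : 0 ≤ l / 2), Real.dist_eq]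

theorem IsDoubling.measure_closedBall_two_pow_mul_le {n : ℕ} {ω : Measure (Fin n → ℝ)}
    {Cd : ℝ} (hω : IsDoubling ω Cd) (c : Fin n → ℝ) {r : ℝ} (hr : 0 < r) (m : ℕ) :
    ω (closedBall c (2 ^ m * r)) ≤ ENNReal.ofReal Cd ^ m * ω (closedBall c r) := by
  induction m with
  | zero => simp
  | succ m ih =>
    have h := hω c (2 * (2 ^ m * r)) (by positivity)
    rw [cube_eq_closedBall c (by positivity), cube_eq_closedBall c (by positivity)] at h
    calc ω (closedBall c (2 ^ (m + 1) * r))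
        = ω (closedBall c (2 * (2 * (2 ^ m * r)) / 2)) := by ring_nf
      _ ≤ ENNReal.ofReal Cd * ω (closedBall c (2 * (2 ^ m * r) / 2)) := h
      _ ≤ ENNReal.ofReal Cd * (ENNReal.ofReal Cd ^ m * ω (closedBall c r)) := by
          rw [mul_div_cancel_left₀ _ two_ne_zero]; gcongr
      _ = ENNReal.ofReal Cd ^ (m + 1) * ω (closedBall c r) := by ring

theorem lintegral_sq_le_of_integral_sub_mul_eq_zero {α : Type*} [MeasurableSpace α]
    {μ : Measure α} {f g : α → ℝ} (hf : MemLp f 2 μ) (hg : MemLp g 2 μ)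
    (h : ∫ x, (f x - g x) * g x ∂μ = 0) :
    ∫⁻ x, ENNReal.ofReal (g x ^ 2) ∂μ ≤ ∫⁻ x, ENNReal.ofReal (f x ^ 2) ∂μ := by
  have hsq : ∀ {u : α → ℝ}, MemLp u 2 μ →
      ∫⁻ x, ENNReal.ofReal (u x ^ 2) ∂μ = ENNReal.ofReal (∫ x, u x ^ 2 ∂μ) := fun hu =>
    (ofReal_integral_eq_lintegral_ofReal hu.integrable_sq (ae_of_all _ fun _ => sq_nonneg _)).symm
  rw [hsq hf, hsq hg]
  apply ENNReal.ofReal_le_ofReal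
  have hdiff : Integrable (fun x => (f x - g x) ^ 2) μ := (hf.sub hg).integrable_sq
  have hcross : Integrable (fun x => 2 * ((f x - g x) * g x)) μ :=
    ((hf.sub hg).integrable_mul hg).const_mul 2
  have hexpand : ∫ x, f x ^ 2 ∂μ
      = ∫ x, ((f x - g x) ^ 2 + 2 * ((f x - g x) * g x) + g x ^ 2) ∂μ :=
    integral_congr_ae (ae_of_all _ fun x => by ring)
  rw [integral_add (by exact hdiff.add hcross) hg.integrable_sq, integral_add hdiff hcross,
    integral_const_mul, h] at hexpand
  have : 0 ≤ ∫ x, (f x - g x) ^ 2 ∂μ := integral_nonneg fun x => sq_nonneg (f x - g x)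
  linarith

theorem ofReal_sq_mul_measure_le_setLIntegral {α : Type*} [MeasurableSpace α] {μ : Measure α}
    {s : Set α} {g : α → ℝ} (hg : Measurable g) {a : ℝ} (h : ∀ y ∈ s, a ≤ |g y|) :
    ENNReal.ofReal a ^ 2 * μ s ≤ ∫⁻ y in s, ENNReal.ofReal (g y ^ 2) ∂μ := by
  rw [← setLIntegral_const]
  refine setLIntegral_mono (hg.pow_const 2).ennreal_ofReal fun y hy => ?_
  rw [← sq_abs, ENNReal.ofReal_pow (abs_nonneg _)]
  gcongr
  exact h y hy

theorem ENNReal.le_mul_rpow_half {x y a z : ℝ≥0∞} (hz0 : z ≠ 0) (hz : z ≠ ∞)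
    (h : x ^ 2 * z ≤ y ^ 2 * a) : x ≤ y * (a / z) ^ (1 / 2 : ℝ) := by
  have h2 : (y ^ 2) ^ (2⁻¹ : ℝ) = y := by
    rw [← rpow_two, ← rpow_mul, mul_inv_cancel₀ two_ne_zero, rpow_one]
  rw [one_div, ← h2, ← mul_rpow_of_nonneg _ _ (by norm_num), le_rpow_inv_iff two_pos, rpow_two,
    ← mul_div_assoc, ENNReal.le_div_iff_mul_le (Or.inl hz0) (Or.inl hz)]
  exact h

theorem ofReal_le_mul_rpow_half_setLIntegral_sq {α : Type*} [MeasurableSpace α]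
    {μ : Measure α} {I J : Set α} (hJI : J ⊆ I) {D : ℝ≥0∞} (hD1 : 1 ≤ D)
    (hD : μ I ≤ D * μ J) (hI0 : μ I ≠ 0) (hI : μ I ≠ ∞) {g : α → ℝ} (hg : Measurable g)
    {s : ℝ} (hs : ∀ y ∈ J, s ≤ 2 * |g y|) :
    ENNReal.ofReal s ≤ 2 * D * ((∫⁻ x in I, ENNReal.ofReal (g x ^ 2) ∂μ) / μ I) ^ (1 / 2 : ℝ) := by
  have hmass : ENNReal.ofReal (s / 2) ^ 2 * μ J ≤ ∫⁻ x in I, ENNReal.ofReal (g x ^ 2) ∂μ :=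
    (ofReal_sq_mul_measure_le_setLIntegral hg fun y hy => by linarith [hs y hy]).trans
      (lintegral_mono_set hJI)
  calc ENNReal.ofReal s = 2 * ENNReal.ofReal (s / 2) := by
        rw [← ofReal_ofNat 2, ← ENNReal.ofReal_mul zero_le_two]; ring_nf
    _ ≤ 2 * (D * ((∫⁻ x in I, ENNReal.ofReal (g x ^ 2) ∂μ) / μ I) ^ (1 / 2 : ℝ)) := by
        gcongr
        refine ENNReal.le_mul_rpow_half hI0 hI ?_
        calc ENNReal.ofReal (s / 2) ^ 2 * μ I ≤ D * (ENNReal.ofReal (s / 2) ^ 2 * μ J) := by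
              rw [mul_left_comm]; gcongr
          _ ≤ D ^ 2 * ∫⁻ x in I, ENNReal.ofReal (g x ^ 2) ∂μ := by
              gcongr; exact le_self_pow₀ hD1 two_ne_zero
    _ = _ := (mul_assoc _ _ _).symm

/-- For a doubling measure `ω`, the orthogonal projection `𝔼^ω_{I;κ} f` of
`f ∈ L²_loc(ω)` onto polynomials of degree `< κ` on a cube `I` (characterized by
the orthogonality relations) satisfies
`‖𝔼^ω_{I;κ} f‖_{L^∞(I,ω)} ≤ C ((1/|I|_ω) ∫_I |f|² dω)^{1/2}`. -/
theorem polynomial_projection_sup_bound (n κ : ℕ) (Cd : ℝ) :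
    ∃ C : ℝ, 0 < C ∧
      ∀ (ω : Measure (Fin n → ℝ)), IsLocallyFiniteMeasure ω → IsDoubling ω Cd →
      ∀ (c : Fin n → ℝ) (l : ℝ), 0 < l →
      ∀ (f : (Fin n → ℝ) → ℝ) (p : MvPolynomial (Fin n) ℝ),
        Measurable f → MemLp f 2 (ω.restrict (Cube n c l)) →
        p.totalDegree < κ →
        -- `eval p` is the orthogonal projection of `f` onto polynomials of degree `< κ` on `I`
        (∀ q : MvPolynomial (Fin n) ℝ, q.totalDegree < κ →
          ∫ x in Cube n c l, (f x - MvPolynomial.eval x p) * MvPolynomial.eval x q ∂ω = 0) →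
        essSup (fun x => ENNReal.ofReal |MvPolynomial.eval x p|)
            (ω.restrict (Cube n c l)) ≤
          ENNReal.ofReal C *
            ((∫⁻ x in Cube n c l, ENNReal.ofReal ((f x) ^ 2) ∂ω) /
              ω (Cube n c l)) ^ ((1 : ℝ) / 2) := by
  obtain ⟨k, hk⟩ := exists_closedBall_abs_eval_ge (σ := Fin n) (κ - 1)
  set M := max Cd 1
  refine ⟨2 * M ^ (k + 1), by positivity, fun ω _ hω c l hl f p _ hf hp horth => ?_⟩
  simp only [cube_eq_closedBall c hl.le] at hf horth ⊢
  set r := l / 2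
  have hr : 0 < r := half_pos hl
  obtain ⟨x₀, hx₀, hmax⟩ := (isCompact_closedBall c r).exists_isMaxOn
    (nonempty_closedBall.mpr hr.le) (continuous_eval p).abs.continuousOn
  obtain ⟨c', hJI, hIJ, hJ⟩ := hk p (by omega) c r hr x₀ hx₀ hmax
  rcases eq_or_ne (ω (closedBall c r)) 0 with hI0 | hI0
  · simp [Measure.restrict_eq_zero.mpr hI0]
  have hI := (isCompact_closedBall c r).measure_lt_top (μ := ω)
  have hD : ω (closedBall c r) ≤ ENNReal.ofReal M ^ (k + 1) * ω (closedBall c' (r / 2 ^ k)) :=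
    (measure_mono hIJ).trans <| (hω.measure_closedBall_two_pow_mul_le c' (by positivity) _).trans
      (by gcongr; exact le_max_left Cd 1)
  have hD1 : 1 ≤ ENNReal.ofReal M ^ (k + 1) :=
    one_le_pow₀ (by rw [← ofReal_one]; gcongr; exact le_max_right Cd 1)
  have : IsFiniteMeasure (ω.restrict (closedBall c r)) := isFiniteMeasure_restrict.mpr hI.ne
  have hp2 : MemLp (fun x => eval x p) 2 (ω.restrict (closedBall c r)) :=
    MemLp.of_bound (continuous_eval p).aestronglyMeasurable _
      (ae_restrict_of_forall_mem measurableSet_closedBall fun x hx => hmax hx)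
  calc essSup (fun x => ENNReal.ofReal |eval x p|) (ω.restrict (closedBall c r))
      ≤ ENNReal.ofReal |eval x₀ p| := essSup_le_of_ae_le _
        (ae_restrict_of_forall_mem measurableSet_closedBall fun x hx =>
          ENNReal.ofReal_le_ofReal (hmax hx))
    _ ≤ _ := ofReal_le_mul_rpow_half_setLIntegral_sq hJI hD1 hD hI0 hI.ne
        (continuous_eval p).measurable hJ
    _ ≤ 2 * ENNReal.ofReal M ^ (k + 1) *
          ((∫⁻ x in closedBall c r, ENNReal.ofReal (f x ^ 2) ∂ω) / ω (closedBall c r)) ^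
            (1 / 2 : ℝ) := by
        gcongr _ * (?_ / _) ^ _
        exact lintegral_sq_le_of_integral_sub_mul_eq_zero hf hp2 (horth p hp)
    _ = _ := by
        rw [ENNReal.ofReal_mul zero_le_two, ofReal_ofNat, ENNReal.ofReal_pow (by positivity)]
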